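/- arXiv:0903.2248 — 2 statements merged into one kernel-verified Lean document; each statement's English description precedes it below -/
import Mathlib

section
/- Let R be an associative unital ring, M an R-bimodule, and P a finitely generated projective right R-module. Then there is an isomorphism of rings End_{R⋉M}(P ⊗_R (R⋉M)) ≅ End_R(P) ⋉ Hom_R(P, P ⊗_R M), where the right-hand side is the trivial square-zero extension of the ring End_R(P) by its bimodule Hom_R(P, P ⊗_R M) (with bimodule structure given by pre- and post-composition, post-composition using the functor − ⊗_R M). -/
open TrivSqZeroExt MulOpposite

section EndBimodule

variable {R P T : Type} [Ring R] [AddCommGroup P] [Module Rᵐᵒᵖ P]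
  [AddCommGroup T] [Module Rᵐᵒᵖ T]

/-- The `End_R(P)`-bimodule structure on `Hom_R(P, T)`: the left action is postcomposition with
`tm f` (where `tm` sends `f` to "`f ⊗ id`"), packaged as a `Module` structure. -/
def homLeftModule (tm : Module.End Rᵐᵒᵖ P →+* Module.End Rᵐᵒᵖ T) :
    Module (Module.End Rᵐᵒᵖ P) (P →ₗ[Rᵐᵒᵖ] T) where
  smul f α := (tm f).comp α
  one_smul α := by show (tm 1).comp α = α; rw [map_one]; rfl
  mul_smul f g α := by
    show (tm (f * g)).comp α = (tm f).comp ((tm g).comp α)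
    rw [map_mul]; rfl
  smul_add f α β := by
    show (tm f).comp (α + β) = (tm f).comp α + (tm f).comp β
    ext p; simp
  smul_zero f := by show (tm f).comp 0 = 0; ext p; simp
  add_smul f g α := by
    show (tm (f + g)).comp α = (tm f).comp α + (tm g).comp α
    rw [map_add]; ext p; simp
  zero_smul α := by show (tm 0).comp α = 0; rw [map_zero]; ext p; simp

/-- The right action of `End_R(P)` on `Hom_R(P, T)` by precomposition, as a module structure
over the opposite ring. -/
def homRightModule :
    Module (Module.End Rᵐᵒᵖ P)ᵐᵒᵖ (P →ₗ[Rᵐᵒᵖ] T) where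
  smul f α := α.comp f.unop
  one_smul α := rfl
  mul_smul f g α := rfl
  smul_add f α β := by show (α + β).comp f.unop = _; ext p; simp; rfl
  smul_zero f := rfl
  add_smul f g α := by
    show α.comp (f.unop + g.unop) = α.comp f.unop + α.comp g.unop
    ext p; simp
  zero_smul α := by show α.comp 0 = 0; ext p; simp

end EndBimodule

/-! Model `P ⊗_R (R ⋉ M)` as `P × (P ⊗_R M)` with `(p, t) • (r, m) = (p r, t r + p ⊗ m)`. It is the
base change of `P` because `M` acts trivially on `P ⊗_R M`, which lets `p ⊗ m ↦ ι p • inr m`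
extend to an `R ⋉ M`-linear map out of `P × (P ⊗_R M)`. An `R ⋉ M`-linear endomorphism `G` of this
model is determined by `G (p, 0) = (f p, α p)`: since `(0, p ⊗ m) = (p, 0) • inr m`, it acts on
`P ⊗_R M` as `f ⊗ id_M`. Composing `(p, t) ↦ (f p, α p + (f ⊗ id) t)` with another such map
multiplies the pairs `(f, α)` as in the trivial square-zero extension. -/

variable {R P M T V : Type} [Ring R] [AddCommGroup M] [Module R M] [Module Rᵐᵒᵖ M]
  [AddCommGroup P] [Module Rᵐᵒᵖ P] [AddCommGroup T] [Module Rᵐᵒᵖ T]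
  [AddCommGroup V] [Module Rᵐᵒᵖ V]

variable (R M) in
abbrev inlOpHom [SMulCommClass R Rᵐᵒᵖ M] : Rᵐᵒᵖ →+* (TrivSqZeroExt R M)ᵐᵒᵖ :=
  RingHom.op (inlHom R M)

variable (R P M T) in
structure BalancedMap where
  toFun : P → M → T
  map_add_left : ∀ (p p' : P) (m : M), toFun (p + p') m = toFun p m + toFun p' m
  map_add_right : ∀ (p : P) (m m' : M), toFun p (m + m') = toFun p m + toFun p m'
  map_smul_left : ∀ (r : R) (p : P) (m : M), toFun (op r • p) m = toFun p (r • m)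
  map_smul_right : ∀ (r : R) (p : P) (m : M), toFun p (op r • m) = op r • toFun p m

namespace BalancedMap

instance : CoeFun (BalancedMap R P M T) (fun _ => P → M → T) := ⟨toFun⟩

variable (B : BalancedMap R P M T)

@[simp]
theorem map_zero_left (m : M) : B 0 m = 0 := by
  simpa using B.map_add_left 0 0 m

@[simp]
theorem map_zero_right (p : P) : B p 0 = 0 := by
  simpa using B.map_add_right p 0 0

def compLinearMap (φ : T →ₗ[Rᵐᵒᵖ] V) : BalancedMap R P M V where
  toFun p m := φ (B p m)
  map_add_left p p' m := by simp [B.map_add_left]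
  map_add_right p m m' := by simp [B.map_add_right]
  map_smul_left r p m := by simp [B.map_smul_left]
  map_smul_right r p m := by simp [B.map_smul_right]

/-- The universal property of the tensor product `P ⊗_R M`. -/
def IsUniversal : Prop :=
  ∀ (V : Type) [AddCommGroup V] [Module Rᵐᵒᵖ V] (B' : BalancedMap R P M V),
    ∃! φ : T →ₗ[Rᵐᵒᵖ] V, ∀ p m, φ (B p m) = B' p m

variable {B}

theorem IsUniversal.linearMap_ext (hB : B.IsUniversal) {φ ψ : T →ₗ[Rᵐᵒᵖ] V}
    (h : ∀ p m, φ (B p m) = ψ (B p m)) : φ = ψ :=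
  (hB V (B.compLinearMap ψ)).unique h fun _ _ => rfl

variable (B)

abbrev BaseChange (_ : BalancedMap R P M T) : Type := P × T

instance : SMul (TrivSqZeroExt R M)ᵐᵒᵖ B.BaseChange where
  smul s x := (op s.unop.fst • x.1, op s.unop.fst • x.2 + B x.1 s.unop.snd)

theorem smul_def (s : (TrivSqZeroExt R M)ᵐᵒᵖ) (x : B.BaseChange) :
    s • x = (op s.unop.fst • x.1, op s.unop.fst • x.2 + B x.1 s.unop.snd) := rfl

theorem inl_smul (r : Rᵐᵒᵖ) (x : B.BaseChange) :
    op (inl r.unop : TrivSqZeroExt R M) • x = r • x := by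
  simp [smul_def, Prod.smul_def]

theorem inr_smul (m : M) (x : B.BaseChange) :
    op (inr m : TrivSqZeroExt R M) • x = ((0 : P), B x.1 m) := by
  simp [smul_def]

variable [SMulCommClass R Rᵐᵒᵖ M]

instance : Module (TrivSqZeroExt R M)ᵐᵒᵖ B.BaseChange where
  one_smul x := by simp [smul_def]
  mul_smul s s' x := by
    simp only [smul_def, unop_mul, fst_mul, snd_mul, op_mul, mul_smul, smul_add,
      B.map_add_right, B.map_smul_left, B.map_smul_right]
    abel_nf
  smul_zero s := by simp [smul_def]
  smul_add s x y := by
    simp only [smul_def, Prod.fst_add, Prod.snd_add, smul_add, B.map_add_left, Prod.mk_add_mk]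
    abel_nf
  add_smul s s' x := by
    simp only [smul_def, unop_add, fst_add, snd_add, op_add, add_smul, B.map_add_right, Prod.mk_add_mk]
    abel_nf
  zero_smul x := by simp [smul_def]

instance : LinearMap.CompatibleSMul B.BaseChange B.BaseChange Rᵐᵒᵖ (TrivSqZeroExt R M)ᵐᵒᵖ where
  map_smul G r x := by rw [← inl_smul, map_smul, inl_smul]

def endFst (G : Module.End (TrivSqZeroExt R M)ᵐᵒᵖ B.BaseChange) : Module.End Rᵐᵒᵖ P :=
  LinearMap.fst Rᵐᵒᵖ P T ∘ₗ G.restrictScalars Rᵐᵒᵖ ∘ₗ LinearMap.inl Rᵐᵒᵖ P T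

def endSnd (G : Module.End (TrivSqZeroExt R M)ᵐᵒᵖ B.BaseChange) : P →ₗ[Rᵐᵒᵖ] T :=
  LinearMap.snd Rᵐᵒᵖ P T ∘ₗ G.restrictScalars Rᵐᵒᵖ ∘ₗ LinearMap.inl Rᵐᵒᵖ P T

theorem endFst_apply (G : Module.End (TrivSqZeroExt R M)ᵐᵒᵖ B.BaseChange) (p : P) :
    B.endFst G p = (G (p, 0)).1 := rfl

theorem endSnd_apply (G : Module.End (TrivSqZeroExt R M)ᵐᵒᵖ B.BaseChange) (p : P) :
    B.endSnd G p = (G (p, 0)).2 := rfl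

theorem apply_zero_balanced (G : Module.End (TrivSqZeroExt R M)ᵐᵒᵖ B.BaseChange) (p : P) (m : M) :
    G (0, B p m) = (0, B (B.endFst G p) m) := by
  rw [endFst_apply, ← inr_smul, ← map_smul, inr_smul]

variable {B}

theorem IsUniversal.end_ext (hB : B.IsUniversal)
    {G₁ G₂ : Module.End (TrivSqZeroExt R M)ᵐᵒᵖ B.BaseChange} (h : ∀ p, G₁ (p, 0) = G₂ (p, 0)) :
    G₁ = G₂ := by
  have hinr : G₁.restrictScalars Rᵐᵒᵖ ∘ₗ LinearMap.inr Rᵐᵒᵖ P T =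
      G₂.restrictScalars Rᵐᵒᵖ ∘ₗ LinearMap.inr Rᵐᵒᵖ P T :=
    hB.linearMap_ext fun p m => by simp [apply_zero_balanced, endFst_apply, h]
  have h0 : ∀ t, G₁ (0, t) = G₂ (0, t) := LinearMap.congr_fun hinr
  refine LinearMap.ext fun ⟨p, t⟩ => ?_
  have hx : ((p, t) : B.BaseChange) = (p, 0) + (0, t) := by simp
  rw [hx, map_add, map_add, h, h0]

variable (B)

def endOfPair (tm : Module.End Rᵐᵒᵖ P →+* Module.End Rᵐᵒᵖ T)
    (htm : ∀ f p m, tm f (B p m) = B (f p) m)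
    (x : TrivSqZeroExt (Module.End Rᵐᵒᵖ P) (P →ₗ[Rᵐᵒᵖ] T)) :
    Module.End (TrivSqZeroExt R M)ᵐᵒᵖ B.BaseChange where
  toFun y := (x.fst y.1, x.snd y.1 + tm x.fst y.2)
  map_add' y y' := by simp only [Prod.fst_add, Prod.snd_add, map_add, Prod.mk_add_mk]; abel_nf
  map_smul' s y := by
    simp only [smul_def, map_smul, map_add, htm, RingHom.id_apply, smul_add]
    abel_nf

theorem endOfPair_apply (tm : Module.End Rᵐᵒᵖ P →+* Module.End Rᵐᵒᵖ T)
    (htm : ∀ f p m, tm f (B p m) = B (f p) m)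
    (x : TrivSqZeroExt (Module.End Rᵐᵒᵖ P) (P →ₗ[Rᵐᵒᵖ] T)) (y : B.BaseChange) :
    B.endOfPair tm htm x y = (x.fst y.1, x.snd y.1 + tm x.fst y.2) := rfl

variable {B}

def endRingEquiv (hB : B.IsUniversal) (tm : Module.End Rᵐᵒᵖ P →+* Module.End Rᵐᵒᵖ T)
    (htm : ∀ f p m, tm f (B p m) = B (f p) m) :
    letI := homLeftModule tm
    letI := homRightModule (R := R) (P := P) (T := T)
    letI : SMulCommClass (Module.End Rᵐᵒᵖ P) (Module.End Rᵐᵒᵖ P)ᵐᵒᵖ (P →ₗ[Rᵐᵒᵖ] T) :=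
      ⟨fun _ _ _ => rfl⟩
    Module.End (TrivSqZeroExt R M)ᵐᵒᵖ B.BaseChange ≃+*
      TrivSqZeroExt (Module.End Rᵐᵒᵖ P) (P →ₗ[Rᵐᵒᵖ] T) :=
  letI := homLeftModule tm
  letI := homRightModule (R := R) (P := P) (T := T)
  letI : SMulCommClass (Module.End Rᵐᵒᵖ P) (Module.End Rᵐᵒᵖ P)ᵐᵒᵖ (P →ₗ[Rᵐᵒᵖ] T) :=
    ⟨fun _ _ _ => rfl⟩
  RingEquiv.symm
  { toFun := B.endOfPair tm htm
    invFun G := inl (B.endFst G) + inr (B.endSnd G)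
    left_inv x := by
      ext p <;> simp [endOfPair_apply, endFst_apply, endSnd_apply]
    right_inv G := hB.end_ext fun p => by
      simp [endOfPair_apply, endFst_apply, endSnd_apply]
    map_mul' x y := LinearMap.ext fun z => Prod.ext rfl <| by
      simp only [endOfPair_apply, Module.End.mul_apply, snd_mul, fst_mul, map_mul, map_add]
      change tm x.fst (y.snd z.1) + x.snd (y.fst z.1) + _ = _
      abel
    map_add' x y := LinearMap.ext fun z => by
      simp only [endOfPair_apply, fst_add, snd_add, map_add, LinearMap.add_apply, Prod.mk_add_mk]
      abel_nf }

section BaseChange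

variable {N : Type} [AddCommGroup N] [Module (TrivSqZeroExt R M)ᵐᵒᵖ N]

theorem exists_semilinear_lift (hB : B.IsUniversal)
    (g : P →ₛₗ[inlOpHom R M] N) :
    ∃ j : T →ₛₗ[inlOpHom R M] N,
      (∀ p m, j (B p m) = op (inr m : TrivSqZeroExt R M) • g p) ∧
        ∀ m t, op (inr m : TrivSqZeroExt R M) • j t = 0 := by
  let _ : Module Rᵐᵒᵖ N := Module.compHom N (inlOpHom R M)
  -- `K` is an `R`-submodule as `inl r * inr m = inr (r • m)`, and it receives `ι p • inr m` as
  -- `inr m * inr m' = 0`.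
  let K : Submodule Rᵐᵒᵖ N :=
    { carrier := {n | ∀ m : M, op (inr m : TrivSqZeroExt R M) • n = 0}
      add_mem' hn hn' m := by rw [smul_add, hn m, hn' m, add_zero]
      zero_mem' m := smul_zero _
      smul_mem' r n hn m := by
        change op (inr m : TrivSqZeroExt R M) • op (inl r.unop : TrivSqZeroExt R M) • n = 0
        rw [← mul_smul, ← op_mul, inl_mul_inr, hn] }
  let B' : BalancedMap R P M K :=
    { toFun p m := ⟨op (inr m : TrivSqZeroExt R M) • g p, fun m' => by
        rw [← mul_smul, ← op_mul, inr_mul_inr, op_zero, zero_smul]⟩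
      map_add_left p p' m := Subtype.ext <| by simp
      map_add_right p m m' := Subtype.ext <| by simp [add_smul]
      map_smul_left r p m := Subtype.ext <| by
        change _ • g (op r • p) = _
        rw [g.map_smulₛₗ]
        change op (inr m : TrivSqZeroExt R M) • op (inl r : TrivSqZeroExt R M) • g p = _
        rw [← mul_smul, ← op_mul, inl_mul_inr]
      map_smul_right r p m := Subtype.ext <| by
        change _ = op (inl r : TrivSqZeroExt R M) • op (inr m : TrivSqZeroExt R M) • g p
        rw [← mul_smul, ← op_mul, inr_mul_inl] }
  obtain ⟨φ, hφ, -⟩ := hB K B'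
  exact ⟨{ toFun t := φ t
           map_add' t t' := by simp
           map_smul' r t := congrArg Subtype.val (φ.map_smul r t) },
    fun p m => congrArg Subtype.val (hφ p m), fun m t => (φ t).2 m⟩

variable (B) in
def toBaseChange :
    P →ₛₗ[inlOpHom R M] B.BaseChange where
  toFun p := (p, 0)
  map_add' p p' := by simp
  map_smul' r p := ((B.inl_smul r (p, 0)).trans (by simp)).symm

def lift (g : P →ₛₗ[inlOpHom R M] N)
    (j : T →ₛₗ[inlOpHom R M] N)
    (hj : ∀ p m, j (B p m) = op (inr m : TrivSqZeroExt R M) • g p)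
    (hkill : ∀ m t, op (inr m : TrivSqZeroExt R M) • j t = 0) :
    B.BaseChange →ₗ[(TrivSqZeroExt R M)ᵐᵒᵖ] N where
  toFun x := g x.1 + j x.2
  map_add' x y := by simp only [Prod.fst_add, Prod.snd_add, map_add]; abel
  map_smul' s x := by
    have hs : s = op (inl s.unop.fst) + op (inr s.unop.snd) := by
      rw [← op_add, inl_fst_add_inr_snd_eq, op_unop]
    conv_rhs => rw [hs]
    simp only [smul_def, map_add, map_smulₛₗ, hj, add_smul, smul_add, hkill, RingHom.id_apply,
      RingHom.op_apply_apply, unop_op, inlHom_apply, add_zero]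
    abel

end BaseChange

theorem IsUniversal.nonempty_linearEquiv (hB : B.IsUniversal)
    (Q : Type) [AddCommGroup Q] [Module (TrivSqZeroExt R M)ᵐᵒᵖ Q]
    (ι : P →ₛₗ[inlOpHom R M] Q)
    (hQ : ∀ (N : Type) [AddCommGroup N] [Module (TrivSqZeroExt R M)ᵐᵒᵖ N],
      ∃ e : (Q →ₗ[(TrivSqZeroExt R M)ᵐᵒᵖ] N) ≃+
          (P →ₛₗ[inlOpHom R M] N),
        ∀ φ p, e φ p = φ (ι p)) :
    Nonempty (Q ≃ₗ[(TrivSqZeroExt R M)ᵐᵒᵖ] B.BaseChange) := by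
  obtain ⟨e, he⟩ := hQ B.BaseChange
  obtain ⟨eQ, heQ⟩ := hQ Q
  obtain ⟨j, hj, hkill⟩ := B.exists_semilinear_lift hB ι
  set θ := e.symm B.toBaseChange
  have hθ : ∀ p, θ (ι p) = (p, 0) := fun p => by rw [← he, e.apply_symm_apply]; rfl
  set ψ := B.lift ι j hj hkill
  have hψ : ∀ p, ψ (p, 0) = ι p := fun p => by simp [ψ, lift]
  refine ⟨.ofLinearMap θ ψ (hB.end_ext fun p => ?_) (eQ.injective <| LinearMap.ext fun p => ?_)⟩
  · simp [hψ, hθ]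
  · rw [heQ, heQ]
    simp [hθ, hψ]

end BalancedMap

theorem end_baseChange_iso_trivSqZeroExt_general
    (R M : Type) [Ring R] [AddCommGroup M] [Module R M] [Module Rᵐᵒᵖ M]
    [SMulCommClass R Rᵐᵒᵖ M]
    (P : Type) [AddCommGroup P] [Module Rᵐᵒᵖ P]
    -- `Q` is the base change of `P` along `inl : R → R ⋉ M`:
    (Q : Type) [AddCommGroup Q] [Module (TrivSqZeroExt R M)ᵐᵒᵖ Q]
    (ι : P →ₛₗ[(RingHom.op (TrivSqZeroExt.inlHom R M) : Rᵐᵒᵖ →+* (TrivSqZeroExt R M)ᵐᵒᵖ)] Q)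
    (hQ : ∀ (N : Type) [AddCommGroup N] [Module (TrivSqZeroExt R M)ᵐᵒᵖ N],
      ∃ e : (Q →ₗ[(TrivSqZeroExt R M)ᵐᵒᵖ] N) ≃+
          (P →ₛₗ[(RingHom.op (TrivSqZeroExt.inlHom R M) :
              Rᵐᵒᵖ →+* (TrivSqZeroExt R M)ᵐᵒᵖ)] N),
        ∀ φ p, e φ p = φ (ι p))
    -- `T` is the tensor product `P ⊗_R M`, given by the universal balanced map `β`:
    (T : Type) [AddCommGroup T] [Module Rᵐᵒᵖ T] (β : P → M → T)
    (hβ₁ : ∀ p p' m, β (p + p') m = β p m + β p' m)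
    (hβ₂ : ∀ p m m', β p (m + m') = β p m + β p m')
    (hβ₃ : ∀ (r : R) p m, β (op r • p) m = β p (r • m))
    (hβ₄ : ∀ (r : R) p m, β p (op r • m) = op r • β p m)
    (hT : ∀ (V : Type) [AddCommGroup V] [Module Rᵐᵒᵖ V] (β' : P → M → V),
      (∀ p p' m, β' (p + p') m = β' p m + β' p' m) →
      (∀ p m m', β' p (m + m') = β' p m + β' p m') →
      (∀ (r : R) p m, β' (op r • p) m = β' p (r • m)) →
      (∀ (r : R) p m, β' p (op r • m) = op r • β' p m) →
      ∃! φ : T →ₗ[Rᵐᵒᵖ] V, ∀ p m, φ (β p m) = β' p m)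
    -- `tm f = f ⊗ id_M`:
    (tm : Module.End Rᵐᵒᵖ P →+* Module.End Rᵐᵒᵖ T)
    (htm : ∀ (f : Module.End Rᵐᵒᵖ P) p m, tm f (β p m) = β (f p) m) :
    letI := homLeftModule (R := R) (P := P) (T := T) tm
    letI := homRightModule (R := R) (P := P) (T := T)
    letI : SMulCommClass (Module.End Rᵐᵒᵖ P) (Module.End Rᵐᵒᵖ P)ᵐᵒᵖ (P →ₗ[Rᵐᵒᵖ] T) :=
      ⟨fun f g α => rfl⟩
    Nonempty
      (Module.End (TrivSqZeroExt R M)ᵐᵒᵖ Q ≃+*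
        TrivSqZeroExt (Module.End Rᵐᵒᵖ P) (P →ₗ[Rᵐᵒᵖ] T)) := by
  let B : BalancedMap R P M T := ⟨β, hβ₁, hβ₂, hβ₃, hβ₄⟩
  have hB : B.IsUniversal := fun V _ _ B' =>
    hT V B' B'.map_add_left B'.map_add_right B'.map_smul_left B'.map_smul_right
  obtain ⟨e⟩ := hB.nonempty_linearEquiv Q ι hQ
  let _ := homLeftModule (R := R) (P := P) (T := T) tm
  let _ := homRightModule (R := R) (P := P) (T := T)
  let _ : SMulCommClass (Module.End Rᵐᵒᵖ P) (Module.End Rᵐᵒᵖ P)ᵐᵒᵖ (P →ₗ[Rᵐᵒᵖ] T) :=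
    ⟨fun _ _ _ => rfl⟩
  exact ⟨e.conjRingEquiv.trans (BalancedMap.endRingEquiv hB tm htm)⟩

/-- for a ring `R`, an `R`-bimodule `M` and a finitely generated projective right
`R`-module `P`, one has `End_{R⋉M}(P ⊗_R (R⋉M)) ≅ End_R(P) ⋉ Hom_R(P, P ⊗_R M)` as rings,
where `Q` plays the role of the base change `P ⊗_R (R⋉M)` (specified by its universal
property), `T` plays the role of `P ⊗_R M` (specified by the universal property of the
balanced product `β`), and `tm` sends `f : End_R(P)` to `f ⊗ id_M : T → T`; the bimodule
structure on `Hom_R(P, T)` is by postcomposition with `tm f` and precomposition. -/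
theorem end_baseChange_iso_trivSqZeroExt
    (R M : Type) [Ring R] [AddCommGroup M] [Module R M] [Module Rᵐᵒᵖ M]
    [SMulCommClass R Rᵐᵒᵖ M]
    (P : Type) [AddCommGroup P] [Module Rᵐᵒᵖ P]
    (hproj : Module.Projective Rᵐᵒᵖ P) (hfg : Module.Finite Rᵐᵒᵖ P)
    -- `Q` is the base change of `P` along `inl : R → R ⋉ M`:
    (Q : Type) [AddCommGroup Q] [Module (TrivSqZeroExt R M)ᵐᵒᵖ Q]
    (ι : P →ₛₗ[(RingHom.op (TrivSqZeroExt.inlHom R M) : Rᵐᵒᵖ →+* (TrivSqZeroExt R M)ᵐᵒᵖ)] Q)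
    (hQ : ∀ (N : Type) [AddCommGroup N] [Module (TrivSqZeroExt R M)ᵐᵒᵖ N],
      ∃ e : (Q →ₗ[(TrivSqZeroExt R M)ᵐᵒᵖ] N) ≃+
          (P →ₛₗ[(RingHom.op (TrivSqZeroExt.inlHom R M) :
              Rᵐᵒᵖ →+* (TrivSqZeroExt R M)ᵐᵒᵖ)] N),
        ∀ φ p, e φ p = φ (ι p))
    -- `T` is the tensor product `P ⊗_R M`, given by the universal balanced map `β`:
    (T : Type) [AddCommGroup T] [Module Rᵐᵒᵖ T] (β : P → M → T)
    (hβ₁ : ∀ p p' m, β (p + p') m = β p m + β p' m)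
    (hβ₂ : ∀ p m m', β p (m + m') = β p m + β p m')
    (hβ₃ : ∀ (r : R) p m, β (op r • p) m = β p (r • m))
    (hβ₄ : ∀ (r : R) p m, β p (op r • m) = op r • β p m)
    (hT : ∀ (V : Type) [AddCommGroup V] [Module Rᵐᵒᵖ V] (β' : P → M → V),
      (∀ p p' m, β' (p + p') m = β' p m + β' p' m) →
      (∀ p m m', β' p (m + m') = β' p m + β' p m') →
      (∀ (r : R) p m, β' (op r • p) m = β' p (r • m)) →
      (∀ (r : R) p m, β' p (op r • m) = op r • β' p m) →
      ∃! φ : T →ₗ[Rᵐᵒᵖ] V, ∀ p m, φ (β p m) = β' p m)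
    -- `tm f = f ⊗ id_M`:
    (tm : Module.End Rᵐᵒᵖ P →+* Module.End Rᵐᵒᵖ T)
    (htm : ∀ (f : Module.End Rᵐᵒᵖ P) p m, tm f (β p m) = β (f p) m) :
    letI := homLeftModule (R := R) (P := P) (T := T) tm
    letI := homRightModule (R := R) (P := P) (T := T)
    letI : SMulCommClass (Module.End Rᵐᵒᵖ P) (Module.End Rᵐᵒᵖ P)ᵐᵒᵖ (P →ₗ[Rᵐᵒᵖ] T) :=
      ⟨fun f g α => rfl⟩
    Nonempty
      (Module.End (TrivSqZeroExt R M)ᵐᵒᵖ Q ≃+*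
        TrivSqZeroExt (Module.End Rᵐᵒᵖ P) (P →ₗ[Rᵐᵒᵖ] T)) :=
  end_baseChange_iso_trivSqZeroExt_general R M P Q ι hQ T β hβ₁ hβ₂ hβ₃ hβ₄ hT tm htm
end

section
/- For any pointed map f : X → Y of pointed topological spaces, there is a natural homeomorphism Ω(hofib(f)) ≅ hofib(Ω f), where hofib(f) is the homotopy fiber (the pullback of the path fibration P Y → Y along f) and Ω denotes the based loop space. -/
open scoped unitInterval

noncomputable section

/-- A topological space "is a CW complex" if it is homeomorphic to (the topological space
underlying) some CW complex. -/
def IsCWComplex (X : Type u) [TopologicalSpace X] : Prop :=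
  ∃ K : TopCat.{u}, Nonempty (TopCat.CWComplex K) ∧ Nonempty (K ≃ₜ X)

/-- A space is `n`-connected (`n : ℤ`) if all homotopy groups `π_i` vanish for `i ≤ n`,
at every basepoint. -/
def TConn (n : ℤ) (X : Type*) [TopologicalSpace X] : Prop :=
  ∀ (x : X) (i : ℕ), (i : ℤ) ≤ n → Subsingleton (HomotopyGroup (Fin i) X x)

/-- The homotopy fiber of `f : X → Y` over `y`: pairs of a point of `X` and a path from `y`
to its image. -/
def HoFib {X Y : Type*} [TopologicalSpace X] [TopologicalSpace Y] (f : C(X, Y)) (y : Y) :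
    Type _ :=
  {p : X × C(I, Y) // p.2 0 = y ∧ p.2 1 = f p.1}

instance {X Y : Type*} [TopologicalSpace X] [TopologicalSpace Y] (f : C(X, Y)) (y : Y) :
    TopologicalSpace (HoFib f y) :=
  inferInstanceAs (TopologicalSpace {p : X × C(I, Y) // p.2 0 = y ∧ p.2 1 = f p.1})

/-- A map is `n`-connected (`n : ℤ`) iff all its homotopy fibers are `(n-1)`-connected,
where `(-1)`-connected means nonempty: equivalently, `f` induces isomorphisms on `π_i`
for `i < n` and a surjection on `π_n`. -/
def ConnMap (n : ℤ) {X Y : Type*} [TopologicalSpace X] [TopologicalSpace Y]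
    (f : C(X, Y)) : Prop :=
  ∀ y : Y, (0 ≤ n → Nonempty (HoFib f y)) ∧
    ∀ (z : HoFib f y) (i : ℕ), (i : ℤ) < n → Subsingleton (HomotopyGroup (Fin i) (HoFib f y) z)

/-- The relation defining the smash product `X ∧ Y`: collapse the wedge
`(X × {y₀}) ∪ ({x₀} × Y)` to a point. -/
def smashSetoid {X Y : Type*} (x₀ : X) (y₀ : Y) : Setoid (X × Y) where
  r a b := a = b ∨ ((a.1 = x₀ ∨ a.2 = y₀) ∧ (b.1 = x₀ ∨ b.2 = y₀))
  iseqv := by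
    constructor
    · exact fun a => Or.inl rfl
    · rintro a b (rfl | h); exacts [Or.inl rfl, Or.inr ⟨h.2, h.1⟩]
    · rintro a b c (rfl | hab) hbc
      · exact hbc
      · rcases hbc with rfl | hbc
        · exact Or.inr hab
        · exact Or.inr ⟨hab.1, hbc.2⟩

/-- The smash product `X ∧ Y` of pointed spaces. -/
def Smash {X Y : Type*} [TopologicalSpace X] [TopologicalSpace Y] (x₀ : X) (y₀ : Y) :
    Type _ :=
  Quotient (smashSetoid x₀ y₀)

instance {X Y : Type*} [TopologicalSpace X] [TopologicalSpace Y] (x₀ : X) (y₀ : Y) :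
    TopologicalSpace (Smash x₀ y₀) :=
  inferInstanceAs (TopologicalSpace (Quotient (smashSetoid x₀ y₀)))

/-- The basepoint of the smash product. -/
def Smash.pt {X Y : Type*} [TopologicalSpace X] [TopologicalSpace Y] (x₀ : X) (y₀ : Y) :
    Smash x₀ y₀ :=
  Quotient.mk _ (x₀, y₀)

/-- Functoriality of the smash product in both variables (for pointed maps). -/
def Smash.map {X Y X' Y' : Type*} [TopologicalSpace X] [TopologicalSpace Y]
    [TopologicalSpace X'] [TopologicalSpace Y'] {x₀ : X} {y₀ : Y} {x₀' : X'} {y₀' : Y'}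
    (f : C(X, X')) (g : C(Y, Y')) (hf : f x₀ = x₀') (hg : g y₀ = y₀') :
    C(Smash x₀ y₀, Smash x₀' y₀') where
  toFun := Quotient.map' (fun p => (f p.1, g p.2)) (by
    rintro a b (rfl | ⟨ha, hb⟩)
    · exact Or.inl rfl
    · refine Or.inr ⟨?_, ?_⟩
      · rcases ha with h | h
        · exact Or.inl (by simp [h, hf])
        · exact Or.inr (by simp [h, hg])
      · rcases hb with h | h
        · exact Or.inl (by simp [h, hf])
        · exact Or.inr (by simp [h, hg]))
  continuous_toFun := by
    exact Continuous.quotient_map' (by fun_prop) _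

end

/-- The based loop space `Ω(Z, z)`. -/
def OmegaSp (Z : Type*) [TopologicalSpace Z] (z : Z) : Type _ :=
  {γ : C(I, Z) // γ 0 = z ∧ γ 1 = z}

instance (Z : Type*) [TopologicalSpace Z] (z : Z) : TopologicalSpace (OmegaSp Z z) :=
  inferInstanceAs (TopologicalSpace {γ : C(I, Z) // γ 0 = z ∧ γ 1 = z})

/-- The map `Ωf : ΩX → ΩY` induced on loop spaces by `f`. -/
def OmegaMap {X Y : Type*} [TopologicalSpace X] [TopologicalSpace Y] (f : C(X, Y))
    (x : X) : C(OmegaSp X x, OmegaSp Y (f x)) where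
  toFun γ := ⟨f.comp γ.1, by simp [γ.2.1, γ.2.2]⟩
  continuous_toFun := by
    apply Continuous.subtype_mk
    exact (ContinuousMap.continuous_postcomp f).comp continuous_subtype_val

/-! A loop `Γ` in `hofib f` is a loop `ω` in `X` together with paths `Γ(t)₂` from `f x₀` to
`f (ω t)`. The two-parameter map `(s, t) ↦ Γ(t)₂(s)` can be read the other way round, as a path
`s ↦ (t ↦ Γ(t)₂(s))` of loops from the constant loop to `Ωf ω`: this is `Ω(PY) ≅ P(ΩY)`.
Since `I` is locally compact, the exponential law makes both readings continuous in `Γ`, so the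
two constructions are mutually inverse continuous maps. -/

open ContinuousMap

def OmegaSp.refl {Z : Type*} [TopologicalSpace Z] (z : Z) : OmegaSp Z z :=
  ⟨.const I z, rfl, rfl⟩

def HoFib.basepoint {X Y : Type*} [TopologicalSpace X] [TopologicalSpace Y] (f : C(X, Y))
    (x : X) : HoFib f (f x) :=
  ⟨(x, .const I (f x)), rfl, rfl⟩

section Lift

variable {S X Y : Type*} [TopologicalSpace S] [TopologicalSpace X] [TopologicalSpace Y]

def OmegaSp.lift {y : Y} (F : C(S × I, Y)) (h₀ : ∀ s, F (s, 0) = y) (h₁ : ∀ s, F (s, 1) = y) :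
    C(S, OmegaSp Y y) where
  toFun s := ⟨F.curry s, h₀ s, h₁ s⟩
  continuous_toFun := F.curry.continuous.subtype_mk _

def HoFib.lift {f : C(X, Y)} {y : Y} (g : C(S, X)) (F : C(S × I, Y)) (h₀ : ∀ s, F (s, 0) = y)
    (h₁ : ∀ s, F (s, 1) = f (g s)) : C(S, HoFib f y) where
  toFun s := ⟨(g s, F.curry s), h₀ s, h₁ s⟩
  continuous_toFun := (g.continuous.prodMk F.curry.continuous).subtype_mk _

end Lift

section LoopHoFib

variable {X Y : Type*} [TopologicalSpace X] [TopologicalSpace Y] (f : C(X, Y)) (x₀ : X)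

def loopHoFibToHoFibLoop :
    C(OmegaSp (HoFib f (f x₀)) (HoFib.basepoint f x₀),
      HoFib (OmegaMap f x₀) (OmegaSp.refl (f x₀))) :=
  HoFib.lift
    (OmegaSp.lift ⟨fun p => (p.1.1 p.2).1.1, by fun_prop⟩
      (fun Γ => congrArg (·.1.1) Γ.2.1) (fun Γ => congrArg (·.1.1) Γ.2.2))
    (OmegaSp.lift ⟨fun p => (p.1.1.1 p.2).1.2 p.1.2, by fun_prop⟩
      (fun p => congrArg (·.1.2 p.2) p.1.2.1) (fun p => congrArg (·.1.2 p.2) p.1.2.2))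
    (fun Γ => Subtype.ext (ext fun t => (Γ.1 t).2.1))
    (fun Γ => Subtype.ext (ext fun t => (Γ.1 t).2.2))

def hoFibLoopToLoopHoFib :
    C(HoFib (OmegaMap f x₀) (OmegaSp.refl (f x₀)),
      OmegaSp (HoFib f (f x₀)) (HoFib.basepoint f x₀)) :=
  OmegaSp.lift
    (HoFib.lift ⟨fun p => p.1.1.1.1 p.2, by fun_prop⟩
      ⟨fun p => (p.1.1.1.2 p.2).1 p.1.2, by fun_prop⟩
      (fun p => congrArg (·.1 p.2) p.1.2.1) (fun p => congrArg (·.1 p.2) p.1.2.2))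
    (fun q => Subtype.ext (Prod.ext q.1.1.2.1 (ext fun s => (q.1.2 s).2.1)))
    (fun q => Subtype.ext (Prod.ext q.1.1.2.2 (ext fun s => (q.1.2 s).2.2)))

def loopHoFibHomeomorph :
    OmegaSp (HoFib f (f x₀)) (HoFib.basepoint f x₀) ≃ₜ
      HoFib (OmegaMap f x₀) (OmegaSp.refl (f x₀)) where
  toFun := loopHoFibToHoFibLoop f x₀
  invFun := hoFibLoopToLoopHoFib f x₀
  left_inv _ := rfl
  right_inv _ := rfl
  continuous_toFun := (loopHoFibToHoFibLoop f x₀).continuous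
  continuous_invFun := (hoFibLoopToLoopHoFib f x₀).continuous

end LoopHoFib

/-- for any pointed map `f : X → Y` there is a natural homeomorphism
`Ω(hofib f) ≅ hofib(Ωf)`, where `hofib` is the strict homotopy fiber over the basepoint
and `Ω` is the based loop space; concretely `Γ ↦ (t ↦ Γ(t)₁, s ↦ t ↦ Γ(t)₂(s))`. -/
theorem loop_hoFib_homeo {X Y : Type} [TopologicalSpace X] [TopologicalSpace Y]
    (f : C(X, Y)) (x₀ : X) :
    ∃ h : @Homeomorph (OmegaSp (HoFib f (f x₀))
          ⟨(x₀, ContinuousMap.const I (f x₀)), by constructor <;> simp⟩)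
        (HoFib (OmegaMap f x₀) ⟨ContinuousMap.const I (f x₀), by constructor <;> simp⟩)
        (instTopologicalSpaceOmegaSp _ _) (instTopologicalSpaceHoFib _ _),
      ∀ Γ, (∀ t : I, ((h Γ).1.1).1 t = (Γ.1 t).1.1) ∧
           (∀ s t : I, ((h Γ).1.2 s).1 t = (Γ.1 t).1.2 s) :=
  ⟨loopHoFibHomeomorph f x₀, fun _ => ⟨fun _ => rfl, fun _ _ => rfl⟩⟩
end
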